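/- arXiv:2410.11775 — 3 statements merged into one kernel-verified Lean document; each statement's English description precedes it below -/
import Mathlib

section
/- Suppose σ = τ = {E}, let T = (T_n : n ∈ ℕ⁺) be a sequence of trees satisfying the Assumption on the base sequence of trees, let W_n = {T_n}, and let P_n be the unique probability distribution on W_n. Suppose p(x̄,ȳ), r(x̄,ȳ) and q(x̄) are closure types over τ and that p ∧ r ∧ q is cofinally satisfiable (i.e. for infinitely many n it is satisfied by some tuples in T_n). Then there is α ∈ [0,1] such that for all ε > 0 there is c > 0 such that for all sufficiently large n: if ā ∈ T_n^{|x̄|}, B ⊆ r(ā, T_n) and |B| ≥ g₃(n), then P_n({A ∈ W_n : if A ⊨ q(ā) then (α − ε)|B| ≤ |p(ā,A) ∩ B| ≤ (α + ε)|B|}) ≥ 1 − e^{−c·g₃(n)}, where p(ā,A) = {b̄ : A ⊨ p(ā,b̄)}. -/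
open Classical Filter
noncomputable section

namespace PaperTrees

/-! ### Trees -/

section Trees
variable {A : Type*} {B : Type*}

/-- Level `l` of an edge relation: level 0 = elements with no incoming edge (roots),
level `l+1` = children of level-`l` elements. -/
def Level (E : A → A → Prop) : ℕ → A → Prop
  | 0 => fun a => ∀ x, ¬ E x a
  | (l+1) => fun a => ∃ b, Level E l b ∧ E b a

def IsRoot (E : A → A → Prop) (a : A) : Prop := ∀ x, ¬ E x a

def IsLeaf (E : A → A → Prop) (a : A) : Prop := ∀ x, ¬ E a x

/-- A tree: `E b a` means `b` is the parent of `a`. -/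
structure IsTree (E : A → A → Prop) : Prop where
  asymm : ∀ a b, E a b → a ≠ b ∧ ¬ E b a
  root_unique : ∃! r, IsRoot E r
  parent_unique : ∀ a, ¬ IsRoot E a → ∃! b, E b a
  acyclic : ∀ a, ¬ Relation.TransGen E a a

def HeightLe (E : A → A → Prop) (h : ℕ) : Prop := ∀ l a, Level E l a → l ≤ h

def HasHeight (E : A → A → Prop) (h : ℕ) : Prop := (∃ a, Level E h a) ∧ HeightLe E h

/-- `a` is an ancestor of `b`: there is a directed path from `a` to `b`. -/
def Ancestor (E : A → A → Prop) (a b : A) : Prop := Relation.TransGen E a b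

/-- The closure of a set in a tree: the set together with the root and all
ancestors of its members. -/
def treeCl (E : A → A → Prop) (S : Set A) : Set A :=
  {a | a ∈ S ∨ IsRoot E a ∨ ∃ b ∈ S, Ancestor E a b}

def IsClosedSet (E : A → A → Prop) (S : Set A) : Prop := treeCl E S = S

def Sibling (E : A → A → Prop) (a b : A) : Prop := a ≠ b ∧ ∃ c, E c a ∧ E c b

def childSet (E : A → A → Prop) (a : A) : Set A := {x | E a x}

/-- The relation induced on a subset (induced substructure). -/
def InducedRel (E : A → A → Prop) (S : Set A) : S → S → Prop := fun x y => E x y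

/-- Isomorphism of binary relational structures. -/
def RelIso' (E : A → A → Prop) (E' : B → B → Prop) : Prop :=
  ∃ f : A ≃ B, ∀ x y, E x y ↔ E' (f x) (f y)

/-- `S` carries a subtree of `(A,E)` rooted at `a`. -/
def IsSubtreeRootedAt (E : A → A → Prop) (S : Set A) (a : A) : Prop :=
  (∃ h : a ∈ S, IsRoot (InducedRel E S) ⟨a, h⟩) ∧ IsTree (InducedRel E S)

/-- `NT E E' a`: the number of subtrees of `(A,E)` rooted at `a` and isomorphic to `(B,E')`. -/
def NT (E : A → A → Prop) (E' : B → B → Prop) (a : A) : ℕ :=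
  Set.ncard {S : Set A | IsSubtreeRootedAt E S a ∧ RelIso' (InducedRel E S) E'}

end Trees

/-! ### PLA*: syntax and semantics -/

/-- A (finite) σ-structure on domain `A`: a Bool-valued interpretation of every
relation symbol. -/
abbrev Struc (σ : Type) (ar : σ → ℕ) (A : Type) : Type := ∀ R : σ, (Fin (ar R) → A) → Bool

/-- Formulas of `PLA*(σ)` with variables in `ℕ`.  Connectives are continuous
functions `[0,1]^k → [0,1]`; aggregation functions are functions
`([0,1]^{<ω})^k → [0,1]` invariant under reordering of the entries of each
sequence; an aggregation node binds the (distinct) variables of `ys`. -/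
inductive PLA (σ : Type) (ar : σ → ℕ) : Type where
  | const : unitInterval → PLA σ ar
  | eqf : ℕ → ℕ → PLA σ ar
  | rel : (R : σ) → (Fin (ar R) → ℕ) → PLA σ ar
  | conn : (k : ℕ) → (C : (Fin k → unitInterval) → unitInterval) → Continuous C →
      (Fin k → PLA σ ar) → PLA σ ar
  | agg : (k : ℕ) → (F : (Fin k → List unitInterval) → unitInterval) →
      (∀ p q : Fin k → List unitInterval, (∀ i, List.Perm (p i) (q i)) → F p = F q) →
      (ys : List ℕ) → ys.Nodup → (Fin k → PLA σ ar) → (Fin k → PLA σ ar) → PLA σ ar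

/-- Update an assignment on the variables of the list `ys` by the tuple `b`. -/
def updMany {A : Type} (β : ℕ → A) (ys : List ℕ) (b : Fin ys.length → A) : ℕ → A :=
  fun v => if h : v ∈ ys then b ⟨ys.idxOf v, List.idxOf_lt_length_iff.mpr h⟩ else β v

/-- The value `A(φ(ā)) ∈ [0,1]` of a `PLA*`-formula in a finite structure under an
assignment. -/
def eval {σ : Type} {ar : σ → ℕ} {A : Type} [Fintype A] (S : Struc σ ar A) :
    PLA σ ar → (ℕ → A) → unitInterval
  | .const c, _ => c
  | .eqf u v, β => if β u = β v then 1 else 0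
  | .rel R t, β => if S R (fun i => β (t i)) then 1 else 0
  | .conn _ C _ f, β => C fun i => eval S (f i) β
  | .agg k F _ ys _ φs χs, β =>
      let L : List (Fin ys.length → A) := (Finset.univ : Finset (Fin ys.length → A)).toList
      let vals : Fin k → List unitInterval := fun i =>
        (L.filter fun b => decide (eval S (χs i) (updMany β ys b) = 1)).map
          fun b => eval S (φs i) (updMany β ys b)
      if ∀ i, vals i ≠ [] then F vals else 0

/-- Free variables (aggregation binds the variables of `ys`). -/
def freeVars {σ : Type} {ar : σ → ℕ} : PLA σ ar → Set ℕ
  | .const _ => ∅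
  | .eqf u v => {u, v}
  | .rel _ t => Set.range t
  | .conn _ _ _ f => ⋃ i, freeVars (f i)
  | .agg _ _ _ ys _ φs χs =>
      (((⋃ i, freeVars (φs i)) ∪ ⋃ i, freeVars (χs i)) \ {v | v ∈ ys})

/-- The relation symbols occurring in a formula. -/
def symbols {σ : Type} {ar : σ → ℕ} : PLA σ ar → Set σ
  | .const _ => ∅
  | .eqf _ _ => ∅
  | .rel R _ => {R}
  | .conn _ _ _ f => ⋃ i, symbols (f i)
  | .agg _ _ _ _ _ φs χs => (⋃ i, symbols (φs i)) ∪ ⋃ i, symbols (χs i)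

/-- No aggregation function occurs in the formula. -/
def AggFree {σ : Type} {ar : σ → ℕ} : PLA σ ar → Prop
  | .const _ => True
  | .eqf _ _ => True
  | .rel _ _ => True
  | .conn _ _ _ f => ∀ i, AggFree (f i)
  | .agg _ _ _ _ _ _ _ => False

/-- `AggOK P φ` holds iff every aggregation subformula
`F(φ₁,…,φ_k : z̄ : χ₁,…,χ_k)` of `φ` satisfies `P k F (χ₁,…,χ_k) z̄`. -/
def AggOK {σ : Type} {ar : σ → ℕ}
    (P : ∀ k : ℕ, ((Fin k → List unitInterval) → unitInterval) → (Fin k → PLA σ ar) → List ℕ → Prop) :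
    PLA σ ar → Prop
  | .const _ => True
  | .eqf _ _ => True
  | .rel _ _ => True
  | .conn _ _ _ f => ∀ i, AggOK P (f i)
  | .agg k F _ ys _ φs χs => P k F χs ys ∧ (∀ i, AggOK P (φs i)) ∧ ∀ i, AggOK P (χs i)

section Signature

variable {σ : Type} {ar : σ → ℕ}

/-- `S` interprets the symbol `e` exactly as the binary relation `E0`. -/
def IsExpansionOf (e : σ) (hE : ar e = 2) {A : Type} (E0 : A → A → Prop) (S : Struc σ ar A) : Prop :=
  ∀ t : Fin (ar e) → A, S e t = true ↔ E0 (t (Fin.cast hE.symm 0)) (t (Fin.cast hE.symm 1))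

/-- `S` expands some tree of height at most `Δ`. -/
def ExpandsTreeLe (e : σ) (hE : ar e = 2) (Δ : ℕ) {A : Type} (S : Struc σ ar A) : Prop :=
  ∃ E0 : A → A → Prop, IsTree E0 ∧ HeightLe E0 Δ ∧ IsExpansionOf e hE E0 S

/-- The canonical expansion of a tree interpreting every other relation symbol as empty;
used to express satisfaction of τ-formulas in the tree itself. -/
def tauStruc [DecidableEq σ] (e : σ) (hE : ar e = 2) {A : Type} (E0 : A → A → Prop) :
    Struc σ ar A :=
  fun R t =>
    if h : R = e then
      decide (E0 (t (Fin.cast (show (2:ℕ) = ar R by rw [h, hE]) 0))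
        (t (Fin.cast (show (2:ℕ) = ar R by rw [h, hE]) 1)))
    else false

/-! ### Atomic types and closure types -/

/-- Data of a conjunction of σ-literals in `n` variables: the literals asserted
positively and those asserted negatively. -/
structure AtomicTypeData (σ : Type) (ar : σ → ℕ) (n : ℕ) : Type where
  pos : Set ((R : σ) × (Fin (ar R) → Fin n))
  neg : Set ((R : σ) × (Fin (ar R) → Fin n))

/-- Satisfaction of an atomic type (which includes the inequalities `xᵢ ≠ xⱼ`). -/
def satAtomic {n : ℕ} {A : Type} (S : Struc σ ar A) (φ : AtomicTypeData σ ar n)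
    (t : Fin n → A) : Prop :=
  (∀ l ∈ φ.pos, S l.1 (fun i => t (l.2 i)) = true) ∧
  (∀ l ∈ φ.neg, S l.1 (fun i => t (l.2 i)) = false) ∧ Function.Injective t

/-- The `E`-literal on the pair of variables `(i, j)`. -/
def pairTup (e : σ) {n : ℕ} (i j : Fin n) : Fin (ar e) → Fin n :=
  fun s => if (s : ℕ) = 0 then i else j

/-- An atomic type over σ (with respect to trees of height at most Δ): it decides all
`E`-literals, contains all inequalities (built into `satAtomic`), and is satisfiable in
some expansion of some tree of height at most `Δ`. -/
def IsAtomicType (e : σ) (hE : ar e = 2) (Δ : ℕ) {n : ℕ} (φ : AtomicTypeData σ ar n) : Prop :=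
  (∀ i j : Fin n, (⟨e, pairTup e i j⟩ ∈ φ.pos ∨ ⟨e, pairTup e i j⟩ ∈ φ.neg)) ∧
  ∃ (A : Type) (_ : Fintype A) (S : Struc σ ar A) (t : Fin n → A),
    ExpandsTreeLe e hE Δ S ∧ satAtomic S φ t

/-- A complete atomic type decides every literal. -/
def CompleteAtomic {n : ℕ} (φ : AtomicTypeData σ ar n) : Prop :=
  ∀ (R : σ) (v : Fin (ar R) → Fin n), ⟨R, v⟩ ∈ φ.pos ∨ ⟨R, v⟩ ∈ φ.neg

/-- An atomic type over τ = {E} uses only `E`-literals. -/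
def TauAtomic (e : σ) {n : ℕ} (φ : AtomicTypeData σ ar n) : Prop :=
  (∀ l ∈ φ.pos, l.1 = e) ∧ ∀ l ∈ φ.neg, l.1 = e

/-- The tuple of values of an assignment on a list of variables. -/
def xtuple {A : Type} (β : ℕ → A) (xs : List ℕ) : Fin xs.length → A := fun i => β (xs.get i)

/-- `p` (a 0/1-valued formula with free variables among `xs`) is, on all σ-structures
expanding trees of height at most `Δ`, equivalent to
`∃ w̄ (φ(x̄,w̄) ∧ "x̄w̄ is closed")` where `φ` is an atomic type implying that each `wᵢ`
lies in the closure of `x̄`. -/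
def IsClosureTypeData (e : σ) (hE : ar e = 2) (Δ : ℕ) (p : PLA σ ar) (xs : List ℕ)
    (m : ℕ) (φ : AtomicTypeData σ ar (xs.length + m)) : Prop :=
  IsAtomicType e hE Δ φ ∧
  (∀ (A : Type) (_ : Fintype A) (S : Struc σ ar A) (E0 : A → A → Prop),
     IsTree E0 → HeightLe E0 Δ → IsExpansionOf e hE E0 S →
     ∀ t : Fin (xs.length + m) → A, satAtomic S φ t →
       ∀ i : Fin m, t (Fin.natAdd xs.length i) ∈
         treeCl E0 (Set.range fun j : Fin xs.length => t (Fin.castAdd m j))) ∧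
  (∀ (A : Type) (_ : Fintype A) (S : Struc σ ar A) (E0 : A → A → Prop),
     IsTree E0 → HeightLe E0 Δ → IsExpansionOf e hE E0 S →
     ∀ β : ℕ → A,
       (eval S p β = 1 ∨ eval S p β = 0) ∧
       (eval S p β = 1 ↔ ∃ w : Fin m → A,
          satAtomic S φ (Fin.append (xtuple β xs) w) ∧
          IsClosedSet E0 (Set.range (Fin.append (xtuple β xs) w))))

/-- A closure type over σ, in the (distinct) free variables `xs`. -/
def IsClosureType (e : σ) (hE : ar e = 2) (Δ : ℕ) (p : PLA σ ar) (xs : List ℕ) : Prop :=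
  xs.Nodup ∧ freeVars p ⊆ {v | v ∈ xs} ∧
  ∃ (m : ℕ) (φ : AtomicTypeData σ ar (xs.length + m)), IsClosureTypeData e hE Δ p xs m φ

/-- A complete closure type over σ. -/
def IsCompleteClosureType (e : σ) (hE : ar e = 2) (Δ : ℕ) (p : PLA σ ar) (xs : List ℕ) : Prop :=
  xs.Nodup ∧ freeVars p ⊆ {v | v ∈ xs} ∧
  ∃ (m : ℕ) (φ : AtomicTypeData σ ar (xs.length + m)),
    IsClosureTypeData e hE Δ p xs m φ ∧ CompleteAtomic φ

/-- A closure type over τ = {E}. -/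
def IsClosureTypeTau (e : σ) (hE : ar e = 2) (Δ : ℕ) (p : PLA σ ar) (xs : List ℕ) : Prop :=
  xs.Nodup ∧ freeVars p ⊆ {v | v ∈ xs} ∧ symbols p ⊆ {e} ∧
  ∃ (m : ℕ) (φ : AtomicTypeData σ ar (xs.length + m)),
    IsClosureTypeData e hE Δ p xs m φ ∧ TauAtomic e φ

/-- Semantic implication on finite σ-structures expanding trees of height at most `Δ`. -/
def ImpOnTrees (e : σ) (hE : ar e = 2) (Δ : ℕ) (p q : PLA σ ar) : Prop :=
  ∀ (A : Type) (_ : Fintype A) (S : Struc σ ar A), ExpandsTreeLe e hE Δ S →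
    ∀ β : ℕ → A, eval S p β = 1 → eval S q β = 1

/-- `q` is (up to equivalence) the restriction `p↾τ` of the closure type `p` to τ. -/
def IsTauRestriction (e : σ) (hE : ar e = 2) (Δ : ℕ) (p q : PLA σ ar) (xs : List ℕ) : Prop :=
  IsClosureTypeTau e hE Δ q xs ∧ ImpOnTrees e hE Δ p q ∧
  ∀ q', IsClosureTypeTau e hE Δ q' xs → ImpOnTrees e hE Δ p q' → ImpOnTrees e hE Δ q q'

/-- The ȳ-rank of the closure type `p(x̄,ȳ)` is `r`: on any realization of `p↾τ` in a tree,
`|cl(b̄) ∖ cl(ā)| = r`. -/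
def HasRank (e : σ) (hE : ar e = 2) (Δ : ℕ) (p : PLA σ ar) (xs ys : List ℕ) (r : ℕ) : Prop :=
  ∃ q, IsTauRestriction e hE Δ p q (xs ++ ys) ∧
    ∀ (A : Type) (_ : Fintype A) (S : Struc σ ar A) (E0 : A → A → Prop),
      IsTree E0 → HeightLe E0 Δ → IsExpansionOf e hE E0 S →
      ∀ β : ℕ → A, eval S q β = 1 →
        (treeCl E0 (β '' {v | v ∈ ys}) \ treeCl E0 (β '' {v | v ∈ xs})).ncard = r

/-- Self-contained closure type: it implies that its variables form a closed set. -/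
def SelfContained (e : σ) (hE : ar e = 2) (Δ : ℕ) (p : PLA σ ar) (xs : List ℕ) : Prop :=
  ∀ (A : Type) (_ : Fintype A) (S : Struc σ ar A) (E0 : A → A → Prop),
    IsTree E0 → HeightLe E0 Δ → IsExpansionOf e hE E0 S →
    ∀ β : ℕ → A, eval S p β = 1 → IsClosedSet E0 (β '' {v | v ∈ xs})

/-- `ψ` is (on expansions of trees of height at most `Δ`) a closure-basic formula
`⋀ᵢ (pᵢ(x̄) → cᵢ)` where the `pᵢ` are complete closure types, `cᵢ ∈ [0,1]`, `∧ = min` and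
`→` is the Łukasiewicz implication. -/
def IsClosureBasic (e : σ) (hE : ar e = 2) (Δ : ℕ) (ψ : PLA σ ar) (xs : List ℕ) : Prop :=
  ∃ (k : ℕ) (p : Fin (k+1) → PLA σ ar) (c : Fin (k+1) → ℝ),
    (∀ i, IsCompleteClosureType e hE Δ (p i) xs ∧ c i ∈ Set.Icc (0:ℝ) 1) ∧
    ∀ (A : Type) (_ : Fintype A) (S : Struc σ ar A), ExpandsTreeLe e hE Δ S → ∀ β : ℕ → A,
      (eval S ψ β : ℝ) =
        Finset.univ.inf' Finset.univ_nonempty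
          (fun i => min 1 (1 - (eval S (p i) β : ℝ) + c i))

end Signature

end PaperTrees
/-! ### Base sequences of trees -/

namespace PaperTrees

/-- Assumption 6.4 on the base sequence of trees. -/
structure TreeSeqAssumption (V : ℕ → Type) [∀ n, Fintype (V n)]
    (En : ∀ n, V n → V n → Prop) (Δ : ℕ) (g1 g2 g3 g4 : ℕ → ℝ) : Prop where
  delta_pos : 0 < Δ
  g1_pos : ∀ n, 0 < g1 n
  g2_pos : ∀ n, 0 < g2 n
  g3_pos : ∀ n, 0 < g3 n
  g4_pos : ∀ n, 0 < g4 n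
  g1_infty : Filter.Tendsto g1 Filter.atTop Filter.atTop
  g2_infty : Filter.Tendsto g2 Filter.atTop Filter.atTop
  g3_infty : Filter.Tendsto g3 Filter.atTop Filter.atTop
  g4_infty : Filter.Tendsto g4 Filter.atTop Filter.atTop
  g3_log : ∀ α : ℝ, Filter.Tendsto (fun n => g3 n - α * Real.log n) Filter.atTop Filter.atTop
  g1_g3 : Filter.Tendsto (fun n => g1 n - g3 n) Filter.atTop Filter.atTop
  g2_over_g1 : Filter.Tendsto (fun n => g2 n / g1 n) Filter.atTop (nhds 0)
  g4_poly : ∃ P : Polynomial ℝ, ∀ n, g4 n = P.eval (n : ℝ)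
  tree : ∀ n, IsTree (En n)
  height : ∀ n, HasHeight (En n) Δ
  leaves_level : ∀ n, ∀ a : V n, IsLeaf (En n) a → Level (En n) Δ a
  child_lb : ∀ n, ∀ a : V n, ¬ IsLeaf (En n) a → g1 n ≤ (Set.ncard (childSet (En n) a) : ℝ)
  child_ub : ∀ n, ∀ a : V n, ¬ IsLeaf (En n) a → (Set.ncard (childSet (En n) a) : ℝ) ≤ g4 n
  siblings : ∀ (B : Type) [Fintype B] (E' : B → B → Prop), IsTree E' →
      (∃ h, 1 ≤ h ∧ HasHeight E' h) →
      ∀ᶠ n in Filter.atTop, ∀ a : V n, ¬ IsRoot (En n) a → 0 < NT (En n) E' a →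
        g3 n ≤ (Set.ncard {b : V n | Sibling (En n) a b ∧
          (NT (En n) E' a : ℝ) - g2 n < (NT (En n) E' b : ℝ) ∧
          (NT (En n) E' b : ℝ) < (NT (En n) E' a : ℝ) + g2 n} : ℝ)

/-- The Light Assumption on the base sequence of trees. -/
structure TreeSeqLight (V : ℕ → Type) [∀ n, Fintype (V n)]
    (En : ∀ n, V n → V n → Prop) (Δ : ℕ) (g1 g4 : ℕ → ℝ) : Prop where
  delta_pos : 0 < Δ
  g1_pos : ∀ n, 0 < g1 n
  g4_pos : ∀ n, 0 < g4 n
  g1_infty : Filter.Tendsto g1 Filter.atTop Filter.atTop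
  g4_poly : ∃ P : Polynomial ℝ, ∀ n, g4 n = P.eval (n : ℝ)
  tree : ∀ n, IsTree (En n)
  height : ∀ n, HasHeight (En n) Δ
  leaves_level : ∀ n, ∀ a : V n, IsLeaf (En n) a → Level (En n) Δ a
  child_lb : ∀ n, ∀ a : V n, ¬ IsLeaf (En n) a → g1 n ≤ (Set.ncard (childSet (En n) a) : ℝ)
  child_ub : ∀ n, ∀ a : V n, ¬ IsLeaf (En n) a → (Set.ncard (childSet (En n) a) : ℝ) ≤ g4 n

/-! ### PLA*-networks and the induced probability distributions -/

section Net
variable {σ : Type} {ar : σ → ℕ}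

/-- A `PLA*(σ)`-network based on τ = {e}: a DAG on `σ ∖ {e}` together with a formula
`θ R ∈ PLA*(par(R) ∪ {e})` (with free variables among `x₁,…,x_{ar R}`) for every
`R ∈ σ ∖ {e}`. -/
structure PLANet (σ : Type) (ar : σ → ℕ) (e : σ) where
  prec : σ → σ → Prop
  acyclic : ∀ R, ¬ Relation.TransGen prec R R
  edges_ne : ∀ R R', prec R R' → R ≠ e ∧ R' ≠ e
  θ : σ → PLA σ ar
  symbols_ok : ∀ R, R ≠ e → symbols (θ R) ⊆ {R' | prec R' R} ∪ {e}
  fv_ok : ∀ R, R ≠ e → freeVars (θ R) ⊆ {v | v < ar R}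

/-- The assignment sending variable `i < k` to `t i`. -/
def tupAssign {A : Type} (ha : Nonempty A) {k : ℕ} (t : Fin k → A) : ℕ → A :=
  fun v => if h : v < k then t ⟨v, h⟩ else ha.some

/-- The probability which the network `N` assigns to the σ-structure `S` as an expansion of
the tree `(A, E0)`: the product, over all `R ∈ σ ∖ {e}` and all tuples `ā`, of
`S(θ_R(ā))` if `R(ā)` holds and `1 - S(θ_R(ā))` otherwise.  (Since
`θ_R ∈ PLA*(par(R) ∪ τ)`, its value in `S` coincides with its value in the reduct of `S` to
the symbols of earlier levels of the DAG, so this agrees with the level-by-level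
definition of the induced distribution.) -/
def netProb [Fintype σ] [DecidableEq σ] (e : σ) (hE : ar e = 2) (N : PLANet σ ar e)
    {A : Type} [Fintype A] [DecidableEq A] (ha : Nonempty A) (E0 : A → A → Prop)
    (S : Struc σ ar A) : ℝ :=
  if IsExpansionOf e hE E0 S then
    ∏ R : σ, if R = e then 1 else
      ∏ t : Fin (ar R) → A,
        if S R t then (eval S (N.θ R) (tupAssign ha t) : ℝ)
        else 1 - (eval S (N.θ R) (tupAssign ha t) : ℝ)
  else 0

/-- The probability of a set of σ-structures under the distribution induced by the network. -/
def netPr [Fintype σ] [DecidableEq σ] (e : σ) (hE : ar e = 2) (N : PLANet σ ar e)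
    {A : Type} [Fintype A] [DecidableEq A] (ha : Nonempty A) (E0 : A → A → Prop)
    (X : Set (Struc σ ar A)) : ℝ :=
  ∑ S : Struc σ ar A, if S ∈ X then netProb e hE N ha E0 S else 0

variable [Fintype σ] [DecidableEq σ]
variable (V : ℕ → Type) [∀ n, Fintype (V n)] [∀ n, DecidableEq (V n)]
variable (En : ∀ n, V n → V n → Prop) (hne : ∀ n, Nonempty (V n))

/-- Asymptotic equivalence of two `PLA*(σ)`-formulas with respect to the sequence of
probability distributions induced by the network on the expansions of the trees `T_n`. -/
def AsympEquiv (e : σ) (hE : ar e = 2) (N : PLANet σ ar e) (φ ψ : PLA σ ar) : Prop :=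
  ∀ ε : ℝ, 0 < ε →
    Filter.Tendsto (fun n => netPr e hE N (hne n) (En n)
        {S | IsExpansionOf e hE (En n) S ∧
          ∀ β : ℕ → V n, |(eval S φ β : ℝ) - (eval S ψ β : ℝ)| ≤ ε})
      Filter.atTop (nhds 1)

/-- `(p, ptau, q)` is `(α, ε)`-balanced in `S` (with `ys` the aggregated variables). -/
def BalancedIn {A : Type} [Fintype A] (S : Struc σ ar A) (p ptau q : PLA σ ar)
    (ys : List ℕ) (α ε : ℝ) : Prop :=
  ∀ β : ℕ → A, eval S q β = 1 →
    (α - ε) * (({b : Fin ys.length → A | eval S ptau (updMany β ys b) = 1}).ncard : ℝ) ≤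
      (({b : Fin ys.length → A | eval S p (updMany β ys b) = 1 ∧
          eval S ptau (updMany β ys b) = 1}).ncard : ℝ) ∧
    (({b : Fin ys.length → A | eval S p (updMany β ys b) = 1 ∧
        eval S ptau (updMany β ys b) = 1}).ncard : ℝ) ≤
      (α + ε) * (({b : Fin ys.length → A | eval S ptau (updMany β ys b) = 1}).ncard : ℝ)

/-- `(p, ptau, q)` is `α`-balanced with respect to the network. -/
def Balanced (e : σ) (hE : ar e = 2) (N : PLANet σ ar e) (p ptau q : PLA σ ar)
    (ys : List ℕ) (α : ℝ) : Prop :=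
  ∀ ε : ℝ, 0 < ε →
    Filter.Tendsto (fun n => netPr e hE N (hne n) (En n)
        {S | IsExpansionOf e hE (En n) S ∧ BalancedIn S p ptau q ys α ε})
      Filter.atTop (nhds 1)

/-- `p ∧ q` is cofinally satisfiable: for infinitely many `n` some expansion of `T_n`
satisfies both. -/
def CofinallySat2 (e : σ) (hE : ar e = 2) (p q : PLA σ ar) : Prop :=
  ∃ᶠ n in Filter.atTop, ∃ S : Struc σ ar (V n), IsExpansionOf e hE (En n) S ∧
    ∃ β : ℕ → V n, eval S p β = 1 ∧ eval S q β = 1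

/-- The closure type `p(x̄,ȳ)` (with `x̄ = xs`, `ȳ = ys`) is ȳ-positive with respect
to the network: for every complete closure type `q(x̄)` such that `p ∧ q` is cofinally
satisfiable, the triple `(p, p↾τ, q)` is `α`-balanced for some `α > 0`. -/
def PosType (e : σ) (hE : ar e = 2) (N : PLANet σ ar e) (Δ : ℕ)
    (p : PLA σ ar) (xs ys : List ℕ) : Prop :=
  ∀ q : PLA σ ar, IsCompleteClosureType e hE Δ q xs → CofinallySat2 V En e hE p q →
    ∃ ptau, IsTauRestriction e hE Δ p ptau (xs ++ ys) ∧
      ∃ α : ℝ, 0 < α ∧ Balanced V En hne e hE N p ptau q ys α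

end Net

/-! ### Convergence testing, continuous and admissible aggregation functions -/

/-- `p` is a convergence testing sequence for parameters `c j` and `al j` (`j < k`):
lengths strictly increase, entries are nonempty sequences, and for every family of
pairwise disjoint intervals `Iv j ⊆ [0,1]`, open in the induced topology on `[0,1]`,
with `c j ∈ Iv j`, eventually all entries lie in `⋃ j, Iv j` and the proportion of
entries in `Iv j` tends to `al j`. -/
def CTFor (p : ℕ → List unitInterval) {k : ℕ} (c : Fin k → ℝ) (al : Fin k → ℝ) : Prop :=
  (∀ n, p n ≠ []) ∧ (∀ n, (p n).length < (p (n+1)).length) ∧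
  ∀ Iv : Fin k → Set ℝ,
    (∀ j, Iv j ⊆ Set.Icc (0:ℝ) 1) → (∀ j, (Iv j).OrdConnected) →
    (∀ j, ∃ U : Set ℝ, IsOpen U ∧ Iv j = U ∩ Set.Icc (0:ℝ) 1) →
    (Pairwise fun i j => Disjoint (Iv i) (Iv j)) →
    (∀ j, c j ∈ Iv j) →
    (∀ᶠ n in Filter.atTop, ∀ x ∈ p n, (x : ℝ) ∈ ⋃ j, Iv j) ∧
    ∀ j, Filter.Tendsto
      (fun n => (((p n).filter (fun x => decide ((x:ℝ) ∈ Iv j))).length : ℝ) / ((p n).length : ℝ))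
      Filter.atTop (nhds (al j))

/-- Convergence-testing sequences of `m`-tuples. -/
def CTForM {m : ℕ} (p : ℕ → Fin m → List unitInterval) (k : Fin m → ℕ)
    (c : ∀ i, Fin (k i) → ℝ) (al : ∀ i, Fin (k i) → ℝ) : Prop :=
  ∀ i, CTFor (fun n => p n i) (c i) (al i)

/-- `F` is ct-continuous with respect to the given parameters. -/
def CTContinuousAt {m : ℕ} (F : (Fin m → List unitInterval) → unitInterval)
    (k : Fin m → ℕ) (c : ∀ i, Fin (k i) → ℝ) (al : ∀ i, Fin (k i) → ℝ) : Prop :=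
  ∀ p q : ℕ → Fin m → List unitInterval, CTForM p k c al → CTForM q k c al →
    Filter.Tendsto (fun n => |(F (p n) : ℝ) - (F (q n) : ℝ)|) Filter.atTop (nhds 0)

/-- `F` is continuous (strongly admissible): ct-continuous for every choice of parameters. -/
def ContinuousAggM {m : ℕ} (F : (Fin m → List unitInterval) → unitInterval) : Prop :=
  ∀ (k : Fin m → ℕ) (c al : ∀ i, Fin (k i) → ℝ),
    (∀ i j, c i j ∈ Set.Icc (0:ℝ) 1) → (∀ i j, al i j ∈ Set.Icc (0:ℝ) 1) →
    CTContinuousAt F k c al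

/-- `F` is admissible: ct-continuous for every choice of parameters with all `al i j > 0`. -/
def AdmissibleAggM {m : ℕ} (F : (Fin m → List unitInterval) → unitInterval) : Prop :=
  ∀ (k : Fin m → ℕ) (c al : ∀ i, Fin (k i) → ℝ),
    (∀ i j, c i j ∈ Set.Icc (0:ℝ) 1) → (∀ i j, al i j ∈ Set.Icc (0:ℝ) 1) →
    (∀ i j, 0 < al i j) → CTContinuousAt F k c al

end PaperTrees

namespace PaperTrees

/-- With σ = τ = {E} the only expansion of `T_n` is `T_n` itself (realized as `tauStruc`),
and `P_n` is the point mass at it. -/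
def pointPr (V : ℕ → Type) [∀ n, Fintype (V n)] [∀ n, DecidableEq (V n)]
    (En : ∀ n, V n → V n → Prop) (n : ℕ)
    (X : Set (Struc Unit (fun _ => 2) (V n))) : ℝ :=
  if tauStruc () rfl (En n) ∈ X then 1 else 0

/-!
With `σ = τ = {E}` each `P_n` is the point mass at `T_n`, and a closure type over `τ` is
complete: its atomic type decides every `E`-literal. If `p` and `r` are realized by the same
tuple `ā` in some tree, their witness tuples both enumerate `cl(ā)`, so they differ by a
permutation fixing `ā`, and the two atomic types agree along it. Hence `r(x̄,ȳ)` implies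
`p(x̄,ȳ)` in every tree of height at most `Δ`, so `p(ā,T_n) ∩ B = B` and `α = 1` works
with probability `1`.
-/

section ClosureTypes

variable {A A' : Type} {E : A → A → Prop} {E' : A' → A' → Prop}
  {S : Struc Unit (fun _ => 2) A} {S' : Struc Unit (fun _ => 2) A'}

theorem isExpansionOf_tauStruc (E : A → A → Prop) :
    IsExpansionOf (σ := Unit) (ar := fun _ => 2) () rfl E (tauStruc () rfl E) := by
  intro t
  simp [tauStruc]

theorem IsExpansionOf.apply_eq_true_iff (hS : IsExpansionOf () rfl E S) (t : Fin 2 → A) :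
    S () t = true ↔ E (t 0) (t 1) :=
  hS t

theorem IsExpansionOf.apply_eq_false_iff (hS : IsExpansionOf () rfl E S) (t : Fin 2 → A) :
    S () t = false ↔ ¬ E (t 0) (t 1) := by
  rw [Bool.eq_false_iff, ne_eq, hS.apply_eq_true_iff]

theorem treeCl_mono {s t : Set A} (h : s ⊆ t) : treeCl E s ⊆ treeCl E t := by
  rintro a (ha | ha | ⟨b, hb, hab⟩)
  · exact Or.inl (h ha)
  · exact Or.inr (Or.inl ha)
  · exact Or.inr (Or.inr ⟨b, h hb, hab⟩)

theorem range_append_eq_treeCl {L m : ℕ} (x : Fin L → A) (w : Fin m → A)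
    (hw : ∀ i, w i ∈ treeCl E (Set.range x))
    (hclosed : IsClosedSet E (Set.range (Fin.append x w))) :
    Set.range (Fin.append x w) = treeCl E (Set.range x) := by
  refine (Set.range_subset_iff.2 fun u => ?_).antisymm ?_
  · refine Fin.addCases (fun j => ?_) (fun i => ?_) u
    · rw [Fin.append_left]
      exact Or.inl ⟨j, rfl⟩
    · rw [Fin.append_right]
      exact hw i
  · have hx : Set.range x ⊆ Set.range (Fin.append x w) := by
      rintro a ⟨j, rfl⟩
      exact ⟨Fin.castAdd m j, Fin.append_left x w j⟩
    exact (treeCl_mono hx).trans hclosed.subset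

theorem exists_equiv_comp_eq_of_range_eq {α β γ : Type*} {f : α → γ} {g : β → γ}
    (hf : Function.Injective f) (hg : Function.Injective g) (h : Set.range f = Set.range g) :
    ∃ e : α ≃ β, g ∘ e = f :=
  ⟨(Equiv.ofInjective f hf).trans ((Equiv.setCongr h).trans (Equiv.ofInjective g hg).symm), by
    funext a
    simp [Equiv.apply_ofInjective_symm]⟩

theorem satAtomic_of_edge_iff {n : ℕ} {φ : AtomicTypeData Unit (fun _ => 2) n}
    (hS : IsExpansionOf () rfl E S) (hS' : IsExpansionOf () rfl E' S')
    {t : Fin n → A} {t' : Fin n → A'} (ht : satAtomic S φ t) (ht' : Function.Injective t')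
    (hedge : ∀ i j, E (t i) (t j) ↔ E' (t' i) (t' j)) : satAtomic S' φ t' := by
  refine ⟨fun l hl => ?_, fun l hl => ?_, ht'⟩
  · exact (hS'.apply_eq_true_iff _).2 ((hedge _ _).1 ((hS.apply_eq_true_iff _).1 (ht.1 l hl)))
  · exact (hS'.apply_eq_false_iff _).2
      ((hedge _ _).not.1 ((hS.apply_eq_false_iff _).1 (ht.2.1 l hl)))

theorem IsAtomicType.edge_iff {Δ n : ℕ} {φ : AtomicTypeData Unit (fun _ => 2) n}
    (hφ : IsAtomicType () rfl Δ φ) (hS : IsExpansionOf () rfl E S)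
    (hS' : IsExpansionOf () rfl E' S') {t : Fin n → A} {t' : Fin n → A'}
    (ht : satAtomic S φ t) (ht' : satAtomic S' φ t') (i j : Fin n) :
    E (t i) (t j) ↔ E' (t' i) (t' j) := by
  rcases hφ.1 i j with h | h
  · exact iff_of_true ((hS.apply_eq_true_iff _).1 (ht.1 _ h))
      ((hS'.apply_eq_true_iff _).1 (ht'.1 _ h))
  · exact iff_of_false ((hS.apply_eq_false_iff _).1 (ht.2.1 _ h))
      ((hS'.apply_eq_false_iff _).1 (ht'.2.1 _ h))

theorem IsClosureTypeData.exists_enum_treeCl {Δ m : ℕ} {p : PLA Unit (fun _ => 2)}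
    {zs : List ℕ} {φ : AtomicTypeData Unit (fun _ => 2) (zs.length + m)}
    (hp : IsClosureTypeData () rfl Δ p zs m φ) [Fintype A] (hE : IsTree E)
    (hΔ : HeightLe E Δ) (hS : IsExpansionOf () rfl E S) {β : ℕ → A} (hβ : eval S p β = 1) :
    ∃ w : Fin m → A, satAtomic S φ (Fin.append (xtuple β zs) w) ∧
      IsClosedSet E (Set.range (Fin.append (xtuple β zs) w)) ∧
      Set.range (Fin.append (xtuple β zs) w) = treeCl E (Set.range (xtuple β zs)) := by
  obtain ⟨w, hsat, hclosed⟩ := (hp.2.2 A ‹_› S E hE hΔ hS β).2.1 hβ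
  refine ⟨w, hsat, hclosed, range_append_eq_treeCl _ w (fun i => ?_) hclosed⟩
  simpa using hp.2.1 A ‹_› S E hE hΔ hS _ hsat i

theorem IsClosureTypeData.eval_eq_one_of_eval_eq_one {Δ mp mr : ℕ}
    {p r : PLA Unit (fun _ => 2)} {zs : List ℕ}
    {φp : AtomicTypeData Unit (fun _ => 2) (zs.length + mp)}
    {φr : AtomicTypeData Unit (fun _ => 2) (zs.length + mr)}
    (hp : IsClosureTypeData () rfl Δ p zs mp φp) (hr : IsClosureTypeData () rfl Δ r zs mr φr)
    [Fintype A] [Fintype A'] (hE : IsTree E) (hΔ : HeightLe E Δ)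
    (hS : IsExpansionOf () rfl E S) {β₀ : ℕ → A} (hp₀ : eval S p β₀ = 1)
    (hr₀ : eval S r β₀ = 1) (hE' : IsTree E') (hΔ' : HeightLe E' Δ)
    (hS' : IsExpansionOf () rfl E' S') {β : ℕ → A'} (hpβ : eval S' p β = 1) :
    eval S' r β = 1 := by
  obtain ⟨wp, hsatp, -, hrangep⟩ := hp.exists_enum_treeCl hE hΔ hS hp₀
  obtain ⟨wr, hsatr, -, hranger⟩ := hr.exists_enum_treeCl hE hΔ hS hr₀
  obtain ⟨w', hsat', hclosed', -⟩ := hp.exists_enum_treeCl hE' hΔ' hS' hpβ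
  obtain ⟨e, he⟩ := exists_equiv_comp_eq_of_range_eq hsatr.2.2 hsatp.2.2
    (hranger.trans hrangep.symm)
  have he_castAdd : ∀ j, e (Fin.castAdd mr j) = Fin.castAdd mp j := fun j =>
    hsatp.2.2 (by simpa using congrFun he (Fin.castAdd mr j))
  set t' := Fin.append (xtuple β zs) w'
  have ht' : Fin.append (xtuple β zs) (fun i => t' (e (Fin.natAdd zs.length i))) = t' ∘ e := by
    funext u
    refine Fin.addCases (fun j => ?_) (fun i => ?_) u <;> simp [he_castAdd, t']
  refine (hr.2.2 A' ‹_› S' E' hE' hΔ' hS' β).2.2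
    ⟨fun i => t' (e (Fin.natAdd zs.length i)), ?_, ?_⟩ <;> rw [ht']
  · refine satAtomic_of_edge_iff hS hS' hsatr (hsat'.2.2.comp e.injective) fun u v => ?_
    rw [← he]
    exact hp.1.edge_iff hS hS' hsatp hsat' (e u) (e v)
  · rwa [Set.range_comp, e.range_eq_univ, Set.image_univ]

end ClosureTypes

theorem statement_6_general
    (V : ℕ → Type) [∀ n, Fintype (V n)] [∀ n, DecidableEq (V n)]
    (En : ∀ n, V n → V n → Prop)
    (Δ : ℕ) (g1 g2 g3 g4 : ℕ → ℝ)
    (hT : TreeSeqAssumption V En Δ g1 g2 g3 g4)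
    (p r q : PLA Unit (fun _ => 2)) (xs ys : List ℕ)
    (hp : IsClosureTypeTau () rfl Δ p (xs ++ ys))
    (hr : IsClosureTypeTau () rfl Δ r (xs ++ ys))
    (hcs : ∃ᶠ n in Filter.atTop, ∃ β : ℕ → V n,
      eval (tauStruc () rfl (En n)) p β = 1 ∧
      eval (tauStruc () rfl (En n)) r β = 1 ∧
      eval (tauStruc () rfl (En n)) q β = 1) :
    ∃ α : ℝ, α ∈ Set.Icc (0:ℝ) 1 ∧
      ∀ ε : ℝ, 0 < ε → ∃ c : ℝ, 0 < c ∧ ∃ n0 : ℕ, ∀ n, n0 ≤ n →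
        ∀ (β : ℕ → V n) (B : Set (Fin ys.length → V n)),
          (∀ b ∈ B, eval (tauStruc () rfl (En n)) r (updMany β ys b) = 1) →
          g3 n ≤ (B.ncard : ℝ) →
          1 - Real.exp (-(c * g3 n)) ≤
            pointPr V En n {S | eval S q β = 1 →
              ((α - ε) * (B.ncard : ℝ) ≤
                  (({b | b ∈ B ∧ eval S p (updMany β ys b) = 1}).ncard : ℝ) ∧
                (({b | b ∈ B ∧ eval S p (updMany β ys b) = 1}).ncard : ℝ) ≤
                  (α + ε) * (B.ncard : ℝ))} := by
  obtain ⟨n₁, β₁, hp₁, hr₁, -⟩ := hcs.exists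
  obtain ⟨-, -, -, mp, φp, hp, -⟩ := hp
  obtain ⟨-, -, -, mr, φr, hr, -⟩ := hr
  have hr_imp_p (n : ℕ) (β : ℕ → V n) (hβ : eval (tauStruc () rfl (En n)) r β = 1) :
      eval (tauStruc () rfl (En n)) p β = 1 :=
    hr.eval_eq_one_of_eval_eq_one hp (hT.tree n₁) (hT.height n₁).2 (isExpansionOf_tauStruc _)
      hr₁ hp₁ (hT.tree n) (hT.height n).2 (isExpansionOf_tauStruc _) hβ
  refine ⟨1, ⟨zero_le_one, le_rfl⟩, fun ε _ => ⟨1, one_pos, 0, fun n _ β B hB _ => ?_⟩⟩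
  have hpB : {b | b ∈ B ∧ eval (tauStruc () rfl (En n)) p (updMany β ys b) = 1} = B :=
    Set.sep_eq_self_iff_mem_true.2 fun b hb => hr_imp_p n _ (hB b hb)
  rw [pointPr, if_pos]
  · linarith [Real.exp_pos (-(1 * g3 n))]
  · intro _
    rw [hpB]
    constructor <;> nlinarith [(B.ncard).cast_nonneg (α := ℝ)]

/-- Lemma 7.7 (2): with σ = τ, for closure types `p(x̄,ȳ)`, `r(x̄,ȳ)` and `q(x̄)` over τ
such that `p ∧ r ∧ q` is cofinally satisfiable, there is `α ∈ [0,1]` such that for every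
`ε > 0` there is `c > 0` such that for all sufficiently large `n`: whenever
`ā ∈ T_n^{|x̄|}`, `B ⊆ r(ā, T_n)` and `|B| ≥ g₃(n)`, the probability of the event
"if `q(ā)` holds then `(α-ε)|B| ≤ |p(ā,·) ∩ B| ≤ (α+ε)|B|`" is at least
`1 - e^{-c·g₃(n)}`. -/
theorem statement_6
    (V : ℕ → Type) [∀ n, Fintype (V n)] [∀ n, DecidableEq (V n)]
    (En : ∀ n, V n → V n → Prop)
    (Δ : ℕ) (g1 g2 g3 g4 : ℕ → ℝ)
    (hT : TreeSeqAssumption V En Δ g1 g2 g3 g4)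
    (p r q : PLA Unit (fun _ => 2)) (xs ys : List ℕ)
    (hp : IsClosureTypeTau () rfl Δ p (xs ++ ys))
    (hr : IsClosureTypeTau () rfl Δ r (xs ++ ys))
    (hq : IsClosureTypeTau () rfl Δ q xs)
    (hcs : ∃ᶠ n in Filter.atTop, ∃ β : ℕ → V n,
      eval (tauStruc () rfl (En n)) p β = 1 ∧
      eval (tauStruc () rfl (En n)) r β = 1 ∧
      eval (tauStruc () rfl (En n)) q β = 1) :
    ∃ α : ℝ, α ∈ Set.Icc (0:ℝ) 1 ∧
      ∀ ε : ℝ, 0 < ε → ∃ c : ℝ, 0 < c ∧ ∃ n0 : ℕ, ∀ n, n0 ≤ n →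
        ∀ (β : ℕ → V n) (B : Set (Fin ys.length → V n)),
          (∀ b ∈ B, eval (tauStruc () rfl (En n)) r (updMany β ys b) = 1) →
          g3 n ≤ (B.ncard : ℝ) →
          1 - Real.exp (-(c * g3 n)) ≤
            pointPr V En n {S | eval S q β = 1 →
              ((α - ε) * (B.ncard : ℝ) ≤
                  (({b | b ∈ B ∧ eval S p (updMany β ys b) = 1}).ncard : ℝ) ∧
                (({b | b ∈ B ∧ eval S p (updMany β ys b) = 1}).ncard : ℝ) ≤
                  (α + ε) * (B.ncard : ℝ))} :=
  statement_6_general V En Δ g1 g2 g3 g4 hT p r q xs ys hp hr hcs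

end PaperTrees
end
end

section
/- Fix Δ ∈ ℕ⁺ and let τ = {E} ⊆ σ with σ finite relational; all trees considered have height at most Δ. Let p(x̄) be a closure type over σ. Then there is a self-contained closure type p*(x̄,ȳ) over σ such that for every σ-structure A that expands a tree: for all ā ∈ A^{|x̄|}, A ⊨ p(ā) if and only if there exists a unique b̄ with A ⊨ p*(ā,b̄). Consequently |p(A)| = |p*(A)|, and if x̄ = ūv̄ and ā ∈ A^{|ū|}, then |p(ā,A)| = |p*(ā,A)|, where φ(ā,A) denotes the set of tuples satisfying φ(ā,·) in A. -/
open Classical Filter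
noncomputable section

/-!
Let `p(x̄)` say `∃ w̄ (φ(x̄, w̄) ∧ x̄w̄ is closed)`. Name the witnesses by fresh variables `ȳ` and
let `p*(x̄, ȳ)` be `p(x̄)` together with the `E`-literals of `φ` on `x̄ȳ` and the statement that
every entry of `x̄ȳ` is the root or has its parent among the entries.

In a tree, a closed tuple whose extra entries lie in the closure of `x̄` is determined by `x̄`
and its `E`-pattern. Indeed, if `wᵢ` is an ancestor of some `xⱼ`, the path between them runs
inside the closed tuple, so any parent-closed tuple with the same pattern and the same `x̄`
contains the same path, and uniqueness of parents makes the two tuples agree along it; if `wᵢ`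
is the root, parent-closedness forces the corresponding entry to be the root as well. Hence
`p*(ā, ȳ)` holds exactly when `ȳ` is a witness for `p(ā)`, the witness is unique, and the
counting identities follow by projecting `ȳ` away.
-/

namespace PaperTrees

section Trees

variable {A : Type*} {E : A → A → Prop}

lemma IsTree.eq_of_edge (hT : IsTree E) {a b c : A} (ha : E a c) (hb : E b c) : a = b := by
  obtain ⟨d, -, hd⟩ := hT.parent_unique c fun hc => hc a ha
  rw [hd a ha, hd b hb]

lemma IsTree.eq_of_isRoot (hT : IsTree E) {r r' : A} (hr : IsRoot E r) (hr' : IsRoot E r') :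
    r = r' := by
  obtain ⟨d, -, hd⟩ := hT.root_unique
  rw [hd r hr, hd r' hr']

lemma IsClosedSet.mem_of_ancestor {s : Set A} (hs : IsClosedSet E s) {a b : A} (hb : b ∈ s)
    (hab : Ancestor E a b) : a ∈ s :=
  hs ▸ Or.inr (Or.inr ⟨b, hb, hab⟩)

def ParentClosed {ι : Type*} (E : A → A → Prop) (t : ι → A) : Prop :=
  ∀ i, IsRoot E (t i) ∨ ∃ j, E (t j) (t i)

lemma IsClosedSet.parentClosed (hT : IsTree E) {ι : Type*} {t : ι → A}
    (hcl : IsClosedSet E (Set.range t)) : ParentClosed E t := by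
  intro i
  by_cases hr : IsRoot E (t i)
  · exact Or.inl hr
  · obtain ⟨a, ha, -⟩ := hT.parent_unique (t i) hr
    obtain ⟨j, rfl⟩ := hcl.mem_of_ancestor ⟨i, rfl⟩ (.single ha)
    exact Or.inr ⟨j, ha⟩

theorem IsTree.eq_of_edge_iff (hT : IsTree E) {ι : Type*} {t t' : ι → A} (X : Set ι)
    (hedge : ∀ i j, E (t i) (t j) ↔ E (t' i) (t' j)) (ht : ParentClosed E t)
    (ht' : Function.Injective t') (hcl' : IsClosedSet E (Set.range t'))
    (hmem : ∀ i, t' i ∈ treeCl E (t' '' X)) (hX : ∀ i ∈ X, t i = t' i) : t = t' := by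
  have step : ∀ {i j}, E (t' i) (t' j) → t j = t' j → t i = t' i := fun {i j} h hj =>
    hT.eq_of_edge (hj ▸ (hedge i j).2 h) h
  have chain : ∀ i b, Relation.TransGen E (t' i) b → ∀ j, b = t' j → t j = t' j →
      t i = t' i := by
    intro i b hb
    induction hb with
    | single h => rintro j rfl; exact step h
    | tail _ hcb ih =>
      rintro j rfl hj
      obtain ⟨k, rfl⟩ := hcl'.mem_of_ancestor ⟨j, rfl⟩ (.single hcb)
      exact ih k rfl (step hcb hj)
  funext i
  rcases hmem i with ⟨j, hj, hji⟩ | hroot | ⟨_, ⟨j, hj, rfl⟩, hanc⟩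
  · exact ht' hji ▸ hX j hj
  · rcases ht i with hr | ⟨j, hji⟩
    · exact hT.eq_of_isRoot hr hroot
    · exact absurd ((hedge j i).1 hji) (hroot _)
  · exact chain i _ hanc j rfl (hX j hj)

end Trees

section Formulas

variable {σ : Type} {ar : σ → ℕ}

def pNOT (q : PLA σ ar) : PLA σ ar :=
  .conn 1 (fun v => unitInterval.symm (v 0)) (by fun_prop) ![q]

def pInf {k : ℕ} (f : Fin k → PLA σ ar) : PLA σ ar :=
  .conn k (Finset.univ.inf fun i v => v i) (Continuous.finset_inf fun i _ => continuous_apply i) f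

def pSup {k : ℕ} (f : Fin k → PLA σ ar) : PLA σ ar :=
  .conn k (Finset.univ.sup fun i v => v i) (Continuous.finset_sup fun i _ => continuous_apply i) f

def pAND (a b : PLA σ ar) : PLA σ ar := pInf ![a, b]

def pOR (a b : PLA σ ar) : PLA σ ar := pSup ![a, b]

def Erel (e : σ) (a b : ℕ) : PLA σ ar :=
  .rel e fun s => if (s : ℕ) = 0 then a else b

def rootFml (e : σ) (a u : ℕ) : PLA σ ar :=
  .agg 1 (fun v => if (1 : unitInterval) ∈ v 0 then 0 else 1)
    (fun _ _ h => by simp only [(h 0).mem_iff]) [u] (List.nodup_singleton u)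
    ![Erel e u a] ![.const 1]

def truthValue (P : Prop) : unitInterval := if P then 1 else 0

lemma truthValue_eq_one {P : Prop} : truthValue P = 1 ↔ P := by
  unfold truthValue; split_ifs with h <;> simp [h]

lemma truthValue_eq_one_or_eq_zero (P : Prop) : truthValue P = 1 ∨ truthValue P = 0 := by
  unfold truthValue; split_ifs <;> simp

variable {A : Type} [Fintype A] {S : Struc σ ar A} {β : ℕ → A}

lemma eval_pNOT {q : PLA σ ar} {P : Prop} (h : eval S q β = truthValue P) :
    eval S (pNOT q) β = truthValue ¬P := by
  change unitInterval.symm (eval S q β) = _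
  rw [h]; unfold truthValue; split_ifs <;> simp

lemma eval_pInf {k : ℕ} {f : Fin k → PLA σ ar} {P : Fin k → Prop}
    (h : ∀ i, eval S (f i) β = truthValue (P i)) :
    eval S (pInf f) β = truthValue (∀ i, P i) := by
  change (Finset.univ.inf fun i (v : Fin k → unitInterval) => v i) (fun i => eval S (f i) β) = _
  rw [Finset.inf_apply]
  simp only [h]
  by_cases hP : ∀ i, P i
  · rw [truthValue_eq_one.2 hP]
    exact (Finset.inf_eq_top_iff _ _).2 fun i _ => truthValue_eq_one.2 (hP i)
  · obtain ⟨i, hi⟩ := not_forall.1 hP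
    rw [truthValue, if_neg hP]
    refine le_antisymm ((Finset.inf_le (Finset.mem_univ i)).trans_eq ?_) bot_le
    exact if_neg hi

lemma eval_pSup {k : ℕ} {f : Fin k → PLA σ ar} {P : Fin k → Prop}
    (h : ∀ i, eval S (f i) β = truthValue (P i)) :
    eval S (pSup f) β = truthValue (∃ i, P i) := by
  change (Finset.univ.sup fun i (v : Fin k → unitInterval) => v i) (fun i => eval S (f i) β) = _
  rw [Finset.sup_apply]
  simp only [h]
  by_cases hP : ∃ i, P i
  · obtain ⟨i, hi⟩ := hP
    rw [truthValue_eq_one.2 ⟨i, hi⟩]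
    exact le_antisymm le_top ((truthValue_eq_one.2 hi).symm.trans_le
      (Finset.le_sup (f := fun i => truthValue (P i)) (Finset.mem_univ i)))
  · rw [truthValue, if_neg hP]
    exact (Finset.sup_eq_bot_iff _ _).2 fun i _ => if_neg (not_exists.1 hP i)

lemma eval_pAND {a b : PLA σ ar} {P Q : Prop} (ha : eval S a β = truthValue P)
    (hb : eval S b β = truthValue Q) : eval S (pAND a b) β = truthValue (P ∧ Q) := by
  rw [pAND, eval_pInf (P := ![P, Q]) (Fin.forall_fin_two.2 ⟨ha, hb⟩), Fin.forall_fin_two]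
  rfl

lemma eval_pOR {a b : PLA σ ar} {P Q : Prop} (ha : eval S a β = truthValue P)
    (hb : eval S b β = truthValue Q) : eval S (pOR a b) β = truthValue (P ∨ Q) := by
  rw [pOR, eval_pSup (P := ![P, Q]) (Fin.forall_fin_two.2 ⟨ha, hb⟩), Fin.exists_fin_two]
  rfl

variable {e : σ} {hE : ar e = 2} {E0 : A → A → Prop}

lemma eval_Erel (hexp : IsExpansionOf e hE E0 S) (a b : ℕ) :
    eval S (Erel e a b) β = truthValue (E0 (β a) (β b)) := by
  change (if S e _ = true then 1 else 0) = _
  rw [if_congr (hexp _) rfl rfl]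
  simp [truthValue]

lemma eval_rootFml (hexp : IsExpansionOf e hE E0 S) [Nonempty A] {a u : ℕ} (hu : u ≠ a) :
    eval S (rootFml e a u) β = truthValue (IsRoot E0 (β a)) := by
  have hval : ∀ b : Fin 1 → A, eval S (Erel e u a) (updMany β [u] b) =
      truthValue (E0 (b 0) (β a)) := fun b => by
    rw [eval_Erel hexp]; simp [updMany, hu.symm]
  simp only [rootFml, eval, Matrix.cons_val_fin_one, hval]
  simp only [truthValue, decide_true, List.filter_true, ne_eq, List.map_eq_nil_iff,
    Finset.toList_eq_nil, forall_const, List.mem_map, Finset.mem_toList, Finset.mem_univ,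
    ite_eq_left_iff, zero_ne_one, imp_false, Decidable.not_not, true_and, ite_not]
  rw [if_neg Finset.univ_nonempty.ne_empty]
  by_cases h : IsRoot E0 (β a)
  · rw [if_neg fun ⟨b, hb⟩ => h _ (by simpa using hb), if_pos h]
  · obtain ⟨c, hc⟩ := _root_.not_forall_not.1 h
    rw [if_pos ⟨fun _ => c, by simpa using hc⟩, if_neg h]

end Formulas

section ClosureFormula

variable {σ : Type} {ar : σ → ℕ} {n : ℕ}

def edgePatternFml (e : σ) (φ : AtomicTypeData σ ar n) (z : Fin n → ℕ) : PLA σ ar :=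
  pInf fun i => pInf fun j =>
    if (⟨e, pairTup e i j⟩ : (R : σ) × (Fin (ar R) → Fin n)) ∈ φ.pos then Erel e (z i) (z j)
    else pNOT (Erel e (z i) (z j))

def parentClosedFml (e : σ) (z : Fin n → ℕ) (u : ℕ) : PLA σ ar :=
  pInf fun i => pOR (rootFml e (z i) u) (pSup fun j => Erel e (z j) (z i))

/-- The formula `p*`. The non-`E` literals of `φ` (possibly infinitely many) are not written
out: they come from the witness of `p`, to which the other two conjuncts pin `z`. -/
def selfContainedFml (e : σ) (p : PLA σ ar) (φ : AtomicTypeData σ ar n) (z : Fin n → ℕ)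
    (u : ℕ) : PLA σ ar :=
  pAND p (pAND (edgePatternFml e φ z) (parentClosedFml e z u))

lemma freeVars_pInf {k : ℕ} (f : Fin k → PLA σ ar) : freeVars (pInf f) = ⋃ i, freeVars (f i) :=
  rfl

lemma freeVars_pSup {k : ℕ} (f : Fin k → PLA σ ar) : freeVars (pSup f) = ⋃ i, freeVars (f i) :=
  rfl

lemma freeVars_pNOT (q : PLA σ ar) : freeVars (pNOT q) = freeVars q := by
  simp only [pNOT, freeVars, Matrix.cons_val_fin_one, Set.iUnion_const]

lemma freeVars_pAND (a b : PLA σ ar) : freeVars (pAND a b) = freeVars a ∪ freeVars b := by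
  ext v
  simp only [pAND, freeVars_pInf, Set.mem_iUnion, Fin.exists_fin_two, Matrix.cons_val_zero,
    Matrix.cons_val_one, Set.mem_union]

lemma freeVars_pOR (a b : PLA σ ar) : freeVars (pOR a b) = freeVars a ∪ freeVars b := by
  ext v
  simp only [pOR, freeVars_pSup, Set.mem_iUnion, Fin.exists_fin_two, Matrix.cons_val_zero,
    Matrix.cons_val_one, Set.mem_union]

lemma freeVars_Erel (e : σ) (a b : ℕ) : freeVars (Erel (ar := ar) e a b) ⊆ {a, b} := by
  rintro v ⟨s, rfl⟩
  by_cases h : (s : ℕ) = 0 <;> simp [h]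

lemma freeVars_rootFml (e : σ) (a u : ℕ) : freeVars (rootFml (ar := ar) e a u) ⊆ {a} := by
  simp only [rootFml, freeVars, Matrix.cons_val_fin_one, Set.iUnion_const, Set.union_empty]
  rintro v ⟨hv, hvu⟩
  rcases freeVars_Erel e u a hv with rfl | rfl
  · exact absurd (List.mem_singleton_self v) hvu
  · rfl

lemma freeVars_selfContainedFml (e : σ) (p : PLA σ ar) (φ : AtomicTypeData σ ar n)
    (z : Fin n → ℕ) (u : ℕ) :
    freeVars (selfContainedFml e p φ z u) ⊆ freeVars p ∪ Set.range z := by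
  have hE : ∀ i j, freeVars (Erel (ar := ar) e (z i) (z j)) ⊆ Set.range z := fun i j =>
    (freeVars_Erel e _ _).trans (by simp [Set.insert_subset_iff])
  simp only [selfContainedFml, edgePatternFml, parentClosedFml, freeVars_pAND, freeVars_pInf,
    freeVars_pOR, freeVars_pSup, Set.union_subset_iff, Set.iUnion_subset_iff]
  refine ⟨Set.subset_union_left, fun i j => ?_, fun i => ⟨?_, fun j => ?_⟩⟩
  · split_ifs
    · exact (hE i j).trans Set.subset_union_right
    · exact (freeVars_pNOT _ ▸ hE i j).trans Set.subset_union_right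
  · exact (freeVars_rootFml e _ u).trans (by simp)
  · exact (hE j i).trans Set.subset_union_right

variable {A : Type} [Fintype A] {S : Struc σ ar A} {β : ℕ → A}
variable {e : σ} {hE : ar e = 2} {E0 : A → A → Prop}

lemma eval_edgePatternFml (hexp : IsExpansionOf e hE E0 S) (φ : AtomicTypeData σ ar n)
    (z : Fin n → ℕ) : eval S (edgePatternFml e φ z) β = truthValue (∀ i j,
      E0 (β (z i)) (β (z j)) ↔ (⟨e, pairTup e i j⟩ : (R : σ) × (Fin (ar R) → Fin n)) ∈ φ.pos) := by
  refine eval_pInf fun i => eval_pInf fun j => ?_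
  by_cases h : (⟨e, pairTup e i j⟩ : (R : σ) × (Fin (ar R) → Fin n)) ∈ φ.pos
  · rw [if_pos h, eval_Erel hexp, iff_true_right h]
  · rw [if_neg h, eval_pNOT (eval_Erel hexp _ _), iff_false_right h]

lemma eval_parentClosedFml (hexp : IsExpansionOf e hE E0 S) [Nonempty A] {z : Fin n → ℕ}
    {u : ℕ} (hu : ∀ i, u ≠ z i) :
    eval S (parentClosedFml e z u) β = truthValue (ParentClosed E0 fun i => β (z i)) :=
  eval_pInf fun i => eval_pOR (eval_rootFml hexp (hu i)) (eval_pSup fun _ => eval_Erel hexp _ _)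

end ClosureFormula

section ClosureType

variable {σ : Type} {ar : σ → ℕ} {e : σ} {hE : ar e = 2} {A : Type} {S : Struc σ ar A}
  {E0 : A → A → Prop}

lemma edge_iff_of_satAtomic (hexp : IsExpansionOf e hE E0 S) {n : ℕ}
    {φ : AtomicTypeData σ ar n}
    (hdec : ∀ i j : Fin n, (⟨e, pairTup e i j⟩ : (R : σ) × (Fin (ar R) → Fin n)) ∈ φ.pos ∨
      (⟨e, pairTup e i j⟩ : (R : σ) × (Fin (ar R) → Fin n)) ∈ φ.neg)
    {t : Fin n → A} (ht : satAtomic S φ t) (i j : Fin n) :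
    E0 (t i) (t j) ↔ (⟨e, pairTup e i j⟩ : (R : σ) × (Fin (ar R) → Fin n)) ∈ φ.pos := by
  have key : S e (fun s => t (pairTup e i j s)) = true ↔ E0 (t i) (t j) := by
    rw [hexp]; simp [pairTup]
  refine ⟨fun h => (hdec i j).resolve_right fun hn => ?_, fun h => key.1 (ht.1 _ h)⟩
  simpa [ht.2.1 _ hn] using key.2 h

variable [Fintype A] {Δ : ℕ} {p : PLA σ ar} {xs : List ℕ} {m : ℕ}
  {φ : AtomicTypeData σ ar (xs.length + m)}

lemma IsClosureTypeData.mem_treeCl (hp : IsClosureTypeData e hE Δ p xs m φ) (hT : IsTree E0)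
    (hH : HeightLe E0 Δ) (hexp : IsExpansionOf e hE E0 S) {t : Fin (xs.length + m) → A}
    (ht : satAtomic S φ t) (i : Fin (xs.length + m)) :
    t i ∈ treeCl E0 (t '' Set.range (Fin.castAdd m)) := by
  refine Fin.addCases (fun j => Or.inl ⟨_, ⟨j, rfl⟩, rfl⟩) (fun k => ?_) i
  rw [← Set.range_comp]
  exact hp.2.1 A ‹_› S E0 hT hH hexp t ht k

lemma IsClosureTypeData.eq_append (hp : IsClosureTypeData e hE Δ p xs m φ) (hT : IsTree E0)
    (hH : HeightLe E0 Δ) (hexp : IsExpansionOf e hE E0 S) {u : Fin xs.length → A}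
    {w : Fin m → A} (hsat : satAtomic S φ (Fin.append u w))
    (hcl : IsClosedSet E0 (Set.range (Fin.append u w))) {t : Fin (xs.length + m) → A}
    (hpat : ∀ i j, E0 (t i) (t j) ↔
      (⟨e, pairTup e i j⟩ : (R : σ) × (Fin (ar R) → Fin (xs.length + m))) ∈ φ.pos)
    (hpc : ParentClosed E0 t) (hu : ∀ j, t (Fin.castAdd m j) = u j) : t = Fin.append u w :=
  hT.eq_of_edge_iff (Set.range (Fin.castAdd m))
    (fun i j => (hpat i j).trans (edge_iff_of_satAtomic hexp hp.1.1 hsat i j).symm) hpc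
    hsat.2.2 hcl (hp.mem_treeCl hT hH hexp hsat)
    (by rintro _ ⟨j, rfl⟩; rw [hu, Fin.append_left])

lemma IsClosureTypeData.witness_unique (hp : IsClosureTypeData e hE Δ p xs m φ)
    (hT : IsTree E0) (hH : HeightLe E0 Δ) (hexp : IsExpansionOf e hE E0 S)
    {u : Fin xs.length → A} {w w' : Fin m → A} (hsat : satAtomic S φ (Fin.append u w))
    (hcl : IsClosedSet E0 (Set.range (Fin.append u w))) (hsat' : satAtomic S φ (Fin.append u w'))
    (hcl' : IsClosedSet E0 (Set.range (Fin.append u w'))) : w' = w := by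
  have h := hp.eq_append hT hH hexp hsat hcl (edge_iff_of_satAtomic hexp hp.1.1 hsat')
    (hcl'.parentClosed hT) (Fin.append_left u w')
  funext k
  simpa using congrFun h (Fin.natAdd _ k)

theorem IsClosureTypeData.eval_selfContainedFml (hp : IsClosureTypeData e hE Δ p xs m φ)
    (hT : IsTree E0) (hH : HeightLe E0 Δ) (hexp : IsExpansionOf e hE E0 S)
    {z : Fin (xs.length + m) → ℕ} (hz : ∀ j, z (Fin.castAdd m j) = xs.get j) {u : ℕ}
    (hu : ∀ i, u ≠ z i) (β : ℕ → A) :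
    eval S (selfContainedFml e p φ z u) β = truthValue
      (satAtomic S φ (fun i => β (z i)) ∧ IsClosedSet E0 (Set.range fun i => β (z i))) := by
  obtain ⟨r, -⟩ := hT.root_unique
  have : Nonempty A := ⟨r⟩
  obtain ⟨hp01, hpw⟩ := hp.2.2 A ‹_› S E0 hT hH hexp β
  have hpβ : eval S p β = truthValue (eval S p β = 1) := by
    rcases hp01 with h | h <;> simp [truthValue, h]
  rw [selfContainedFml, eval_pAND hpβ
    (eval_pAND (eval_edgePatternFml hexp φ z) (eval_parentClosedFml hexp hu)), hpw]
  congr 1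
  apply propext
  constructor
  · rintro ⟨⟨w, hw, hwcl⟩, hpat, hpc⟩
    rw [hp.eq_append hT hH hexp hw hwcl hpat hpc fun j => by rw [hz]; rfl]
    exact ⟨hw, hwcl⟩
  · rintro ⟨hsat, hcl⟩
    have happ : Fin.append (xtuple β xs) (fun k => β (z (Fin.natAdd _ k))) = fun i => β (z i) := by
      conv_rhs => rw [← Fin.append_castAdd_natAdd (f := fun i => β (z i))]
      simp only [hz]
      rfl
    exact ⟨⟨_, happ ▸ hsat, happ ▸ hcl⟩, edge_iff_of_satAtomic hexp hp.1.1 hsat,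
      hcl.parentClosed hT⟩

end ClosureType

section Assignments

variable {A : Type} {β : ℕ → A}

lemma updMany_of_notMem {ys : List ℕ} (b : Fin ys.length → A) {v : ℕ} (h : v ∉ ys) :
    updMany β ys b v = β v :=
  dif_neg h

lemma updMany_get {ys : List ℕ} (hnd : ys.Nodup) (b : Fin ys.length → A) (i : Fin ys.length) :
    updMany β ys b (ys.get i) = b i := by
  rw [updMany, dif_pos (List.get_mem ys i)]
  congr
  exact hnd.idxOf_getElem i i.2

lemma xtuple_updMany {ys : List ℕ} (hnd : ys.Nodup) (b : Fin ys.length → A) :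
    xtuple (updMany β ys b) ys = b :=
  funext (updMany_get hnd b)

lemma xtuple_updMany_of_disjoint {xs ys : List ℕ} (h : xs.Disjoint ys) (b : Fin ys.length → A) :
    xtuple (updMany β ys b) xs = xtuple β xs :=
  funext fun i => updMany_of_notMem b (h (List.get_mem xs i))

lemma updMany_append {us ys : List ℕ} (hnd : (us ++ ys).Nodup) (T : Fin (us ++ ys).length → A) :
    updMany β (us ++ ys) T =
      updMany (updMany β us fun i => T (Fin.cast List.length_append.symm (Fin.castAdd _ i))) ys
        fun k => T (Fin.cast List.length_append.symm (Fin.natAdd _ k)) := by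
  obtain ⟨-, -, hdisj⟩ := List.nodup_append'.1 hnd
  funext v
  by_cases hy : v ∈ ys
  · have hu : v ∉ us := fun hu => hdisj hu hy
    simp only [updMany, hy, List.mem_append, or_true, dif_pos]
    congr 1
    exact Fin.ext (List.idxOf_append_of_notMem hu)
  · by_cases hu : v ∈ us
    · simp only [updMany, hy, hu, List.mem_append, true_or, dif_pos, dif_neg, not_false_eq_true]
      congr 1
      exact Fin.ext (List.idxOf_append_of_mem hu)
    · simp [updMany, hy, hu]

lemma get_append_cast (xs ys : List ℕ) :
    (xs ++ ys).get ∘ Fin.cast List.length_append.symm = Fin.append xs.get ys.get := by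
  funext i
  refine Fin.addCases (fun j => ?_) (fun k => ?_) i
  · simp [List.getElem_append_left]
  · simp [List.getElem_append_right]

lemma append_get_mem {xs ys : List ℕ} (i : Fin (xs.length + ys.length)) :
    Fin.append xs.get ys.get i ∈ xs ++ ys := by
  rw [← get_append_cast]
  exact List.get_mem _ _

lemma ne_append_get_of_notMem {xs ys : List ℕ} {u : ℕ} (hu : u ∉ xs ++ ys)
    (i : Fin (xs.length + ys.length)) : u ≠ Fin.append xs.get ys.get i :=
  fun h => hu (h ▸ append_get_mem i)

lemma range_xtuple (β : ℕ → A) (l : List ℕ) : Set.range (xtuple β l) = β '' {v | v ∈ l} := by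
  rw [← Set.range_list_get, ← Set.range_comp]
  rfl

lemma image_eq_range_append_get (β : ℕ → A) (xs ys : List ℕ) :
    β '' {v | v ∈ xs ++ ys} = Set.range fun i => β (Fin.append xs.get ys.get i) := by
  rw [← get_append_cast, ← Set.range_list_get, ← Set.range_comp]
  exact ((finCongr List.length_append.symm).surjective.range_comp (β ∘ (xs ++ ys).get)).symm

lemma comp_append_get (β : ℕ → A) (xs ys : List ℕ) :
    (fun i => β (Fin.append xs.get ys.get i)) = Fin.append (xtuple β xs) (xtuple β ys) := by
  funext i
  refine Fin.addCases (fun j => ?_) (fun k => ?_) i <;> simp [xtuple]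

end Assignments

section Counting

variable {σ : Type} {ar : σ → ℕ} {A : Type} [Fintype A] {S : Struc σ ar A}

theorem ncard_eq_of_unique_extension {p p' : PLA σ ar} {us ys : List ℕ} (hnd : (us ++ ys).Nodup)
    (hex : ∀ γ : ℕ → A, eval S p γ = 1 ↔ ∃ b, eval S p' (updMany γ ys b) = 1)
    (huniq : ∀ γ : ℕ → A, {b | eval S p' (updMany γ ys b) = 1}.Subsingleton) (β : ℕ → A) :
    {t : Fin us.length → A | eval S p (updMany β us t) = 1}.ncard =
      {t : Fin (us ++ ys).length → A | eval S p' (updMany β (us ++ ys) t) = 1}.ncard := by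
  let F : (Fin (us ++ ys).length → A) ≃ (Fin us.length → A) × (Fin ys.length → A) :=
    ((finCongr List.length_append).arrowCongr (Equiv.refl A)).trans (Fin.appendEquiv _ _).symm
  let P := {tb : (Fin us.length → A) × (Fin ys.length → A) |
    eval S p' (updMany (updMany β us tb.1) ys tb.2) = 1}
  have hpre : {t : Fin (us ++ ys).length → A | eval S p' (updMany β (us ++ ys) t) = 1} =
      F ⁻¹' P := by
    ext T
    simp only [Set.mem_ofPred_eq, Set.mem_preimage, updMany_append hnd T, P]
    rfl
  have himage : Prod.fst '' P = {t | eval S p (updMany β us t) = 1} := by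
    ext t
    simp [P, hex]
  have hinj : Set.InjOn Prod.fst P := by
    rintro ⟨t, b⟩ hb ⟨t', b'⟩ hb' (rfl : t = t')
    rw [huniq (updMany β us t) (x := b) hb hb']
  rw [hpre, Set.ncard_preimage_of_injective_subset_range F.injective
    (F.surjective.range_eq ▸ Set.subset_univ P), ← himage, hinj.ncard_image]

end Counting

section Relabel

variable {σ : Type} {ar : σ → ℕ} {n n' : ℕ}

def AtomicTypeData.map (g : Fin n → Fin n') (φ : AtomicTypeData σ ar n) :
    AtomicTypeData σ ar n' where
  pos := (fun l => ⟨l.1, g ∘ l.2⟩) '' φ.pos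
  neg := (fun l => ⟨l.1, g ∘ l.2⟩) '' φ.neg

lemma satAtomic_map {A : Type} {S : Struc σ ar A} (g : Fin n ≃ Fin n')
    (φ : AtomicTypeData σ ar n) (t : Fin n' → A) :
    satAtomic S (φ.map g) t ↔ satAtomic S φ (t ∘ g) := by
  simp only [satAtomic, AtomicTypeData.map, Set.forall_mem_image, EquivLike.injective_comp]
  rfl

lemma IsAtomicType.map {e : σ} {hE : ar e = 2} {Δ : ℕ} {φ : AtomicTypeData σ ar n}
    (hφ : IsAtomicType e hE Δ φ) (g : Fin n ≃ Fin n') : IsAtomicType e hE Δ (φ.map g) := by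
  obtain ⟨hdec, B, _, S, t, hS, ht⟩ := hφ
  refine ⟨fun i j => ?_, B, ‹_›, S, t ∘ g.symm, hS,
    (satAtomic_map g φ _).2 (by simpa [Function.comp_def] using ht)⟩
  have hpair : g ∘ pairTup (ar := ar) e (g.symm i) (g.symm j) = pairTup e i j := by
    funext s; simp [pairTup, apply_ite g]
  rcases hdec (g.symm i) (g.symm j) with h | h
  · exact Or.inl ⟨_, h, by simp only [hpair]⟩
  · exact Or.inr ⟨_, h, by simp only [hpair]⟩

end Relabel

lemma exists_fresh (xs : List ℕ) (hxs : xs.Nodup) (m : ℕ) :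
    ∃ (ys : List ℕ) (u : ℕ), ys.length = m ∧ (xs ++ ys).Nodup ∧ u ∉ xs ++ ys := by
  have hlt : ∀ v ∈ xs, v < xs.sum + 1 := fun v hv => Nat.lt_succ_of_le (List.le_sum_of_mem hv)
  refine ⟨List.range' (xs.sum + 1) m, xs.sum + 1 + m, List.length_range',
    List.nodup_append'.2 ⟨hxs, List.nodup_range', fun v hv hv' => ?_⟩, ?_⟩
  · have := hlt v hv
    rw [List.mem_range'_1] at hv'
    omega
  · rw [List.mem_append, List.mem_range'_1]
    rintro (h | h)
    · have := hlt _ h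
      omega
    · omega

section SelfContainedVersion

variable {σ : Type} {ar : σ → ℕ} {e : σ} {hE : ar e = 2} {Δ : ℕ} {p : PLA σ ar}
  {xs ys : List ℕ} {φ : AtomicTypeData σ ar (xs.length + ys.length)} {u : ℕ}

lemma IsClosureTypeData.eval_selfContainedFml_append_get
    (hp : IsClosureTypeData e hE Δ p xs ys.length φ) (hu : u ∉ xs ++ ys) {A : Type} [Fintype A]
    {S : Struc σ ar A} {E0 : A → A → Prop} (hT : IsTree E0) (hH : HeightLe E0 Δ)
    (hexp : IsExpansionOf e hE E0 S) (β : ℕ → A) :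
    eval S (selfContainedFml e p φ (Fin.append xs.get ys.get) u) β = truthValue
      (satAtomic S φ (fun i => β (Fin.append xs.get ys.get i)) ∧
        IsClosedSet E0 (β '' {v | v ∈ xs ++ ys})) := by
  rw [hp.eval_selfContainedFml hT hH hexp (Fin.append_left _ _)
    (ne_append_get_of_notMem hu), image_eq_range_append_get]

theorem IsClosureTypeData.isClosureType_selfContainedFml
    (hp : IsClosureTypeData e hE Δ p xs ys.length φ) (hfv : freeVars p ⊆ {v | v ∈ xs})
    (hnd : (xs ++ ys).Nodup) (hu : u ∉ xs ++ ys) :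
    IsClosureType e hE Δ (selfContainedFml e p φ (Fin.append xs.get ys.get) u) (xs ++ ys) := by
  refine ⟨hnd, (freeVars_selfContainedFml ..).trans (Set.union_subset
    (hfv.trans fun v hv => List.mem_append_left ys hv) (Set.range_subset_iff.2 append_get_mem)),
    0, φ.map (finCongr List.length_append.symm), hp.1.map _,
    fun _ _ _ _ _ _ _ _ _ i => i.elim0, fun A _ S E0 hT hH hexp β => ?_⟩
  rw [hp.eval_selfContainedFml_append_get hu hT hH hexp]
  refine ⟨truthValue_eq_one_or_eq_zero _, truthValue_eq_one.trans ?_⟩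
  have h0 : ∀ w : Fin 0 → A, Fin.append (xtuple β (xs ++ ys)) w = xtuple β (xs ++ ys) :=
    fun w => Fin.append_right_nil _ w rfl
  simp only [h0, satAtomic_map, exists_const]
  have ht : xtuple β (xs ++ ys) ∘ finCongr List.length_append.symm =
      fun i => β (Fin.append xs.get ys.get i) := by
    rw [← get_append_cast]; rfl
  rw [ht, range_xtuple]

theorem IsClosureTypeData.selfContained_selfContainedFml
    (hp : IsClosureTypeData e hE Δ p xs ys.length φ) (hu : u ∉ xs ++ ys) :
    SelfContained e hE Δ (selfContainedFml e p φ (Fin.append xs.get ys.get) u) (xs ++ ys) := by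
  intro A _ S E0 hT hH hexp β h
  rw [hp.eval_selfContainedFml_append_get hu hT hH hexp, truthValue_eq_one] at h
  exact h.2

variable {A : Type} [Fintype A] {S : Struc σ ar A} {E0 : A → A → Prop}

lemma IsClosureTypeData.eval_selfContainedFml_updMany
    (hp : IsClosureTypeData e hE Δ p xs ys.length φ) (hnd : (xs ++ ys).Nodup)
    (hu : u ∉ xs ++ ys) (hT : IsTree E0) (hH : HeightLe E0 Δ) (hexp : IsExpansionOf e hE E0 S)
    (γ : ℕ → A) (b : Fin ys.length → A) :
    eval S (selfContainedFml e p φ (Fin.append xs.get ys.get) u) (updMany γ ys b) = truthValue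
      (satAtomic S φ (Fin.append (xtuple γ xs) b) ∧
        IsClosedSet E0 (Set.range (Fin.append (xtuple γ xs) b))) := by
  obtain ⟨-, hys, hdisj⟩ := List.nodup_append'.1 hnd
  rw [hp.eval_selfContainedFml hT hH hexp (Fin.append_left _ _)
    (ne_append_get_of_notMem hu), comp_append_get,
    xtuple_updMany_of_disjoint hdisj, xtuple_updMany hys]

theorem IsClosureTypeData.eval_eq_one_iff_exists
    (hp : IsClosureTypeData e hE Δ p xs ys.length φ) (hnd : (xs ++ ys).Nodup)
    (hu : u ∉ xs ++ ys) (hT : IsTree E0) (hH : HeightLe E0 Δ) (hexp : IsExpansionOf e hE E0 S)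
    (γ : ℕ → A) :
    eval S p γ = 1 ↔
      ∃ b, eval S (selfContainedFml e p φ (Fin.append xs.get ys.get) u) (updMany γ ys b) = 1 := by
  simp only [hp.eval_selfContainedFml_updMany hnd hu hT hH hexp, truthValue_eq_one]
  exact (hp.2.2 A ‹_› S E0 hT hH hexp γ).2

theorem IsClosureTypeData.subsingleton_extensions
    (hp : IsClosureTypeData e hE Δ p xs ys.length φ) (hnd : (xs ++ ys).Nodup)
    (hu : u ∉ xs ++ ys) (hT : IsTree E0) (hH : HeightLe E0 Δ) (hexp : IsExpansionOf e hE E0 S)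
    (γ : ℕ → A) :
    Set.Subsingleton
      {b | eval S (selfContainedFml e p φ (Fin.append xs.get ys.get) u) (updMany γ ys b) = 1} := by
  intro b hb b' hb'
  simp only [Set.mem_ofPred_eq, hp.eval_selfContainedFml_updMany hnd hu hT hH hexp,
    truthValue_eq_one] at hb hb'
  exact hp.witness_unique hT hH hexp hb'.1 hb'.2 hb.1 hb.2

end SelfContainedVersion

theorem statement_7_general
    {σ : Type} {ar : σ → ℕ} (e : σ) (hE : ar e = 2) (Δ : ℕ)
    (p : PLA σ ar) (xs : List ℕ) (hp : IsClosureType e hE Δ p xs) :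
    ∃ (ys : List ℕ) (p' : PLA σ ar),
      (xs ++ ys).Nodup ∧
      IsClosureType e hE Δ p' (xs ++ ys) ∧
      SelfContained e hE Δ p' (xs ++ ys) ∧
      ∀ (A : Type) (_ : Fintype A) (S : Struc σ ar A), ExpandsTreeLe e hE Δ S →
        (∀ β : ℕ → A, (eval S p β = 1 ↔
            ∃! b : Fin ys.length → A, eval S p' (updMany β ys b) = 1)) ∧
        (∀ β : ℕ → A,
          Set.ncard {t : Fin xs.length → A | eval S p (updMany β xs t) = 1} =
          Set.ncard {t : Fin (xs ++ ys).length → A | eval S p' (updMany β (xs ++ ys) t) = 1}) ∧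
        (∀ k : ℕ, k ≤ xs.length → ∀ β : ℕ → A,
          Set.ncard {t : Fin (xs.drop k).length → A | eval S p (updMany β (xs.drop k) t) = 1} =
          Set.ncard {t : Fin ((xs.drop k) ++ ys).length → A |
            eval S p' (updMany β ((xs.drop k) ++ ys) t) = 1}) := by
  obtain ⟨hxs, hfv, m, φ, hφ⟩ := hp
  obtain ⟨ys, u, rfl, hnd, hu⟩ := exists_fresh xs hxs m
  refine ⟨ys, selfContainedFml e p φ (Fin.append xs.get ys.get) u, hnd,
    hφ.isClosureType_selfContainedFml hfv hnd hu, hφ.selfContained_selfContainedFml hu, ?_⟩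
  rintro A _ S ⟨E0, hT, hH, hexp⟩
  have hex := hφ.eval_eq_one_iff_exists hnd hu hT hH hexp
  have huniq := hφ.subsingleton_extensions hnd hu hT hH hexp
  refine ⟨fun β => ?_, ncard_eq_of_unique_extension hnd hex huniq, fun k _ =>
    ncard_eq_of_unique_extension (hnd.sublist ((List.drop_sublist k xs).append_right ys)) hex huniq⟩
  rw [hex]
  exact ⟨fun ⟨b, hb⟩ => ⟨b, hb, fun b' hb' => huniq β hb' hb⟩, fun ⟨b, hb, _⟩ => ⟨b, hb⟩⟩

/-- Lemma 5.13: for every closure type `p(x̄)` over σ there is a self-contained closure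
type `p*(x̄,ȳ)` over σ such that, on every σ-structure expanding a tree of height at most
`Δ`, `p(x̄)` is equivalent to `∃! ȳ p*(x̄,ȳ)`; consequently `|p(A)| = |p*(A)|`, and for
every splitting `x̄ = ūv̄` and every `ā ∈ A^{|ū|}`, `|p(ā,A)| = |p*(ā,A)|`. -/
theorem statement_7
    {σ : Type} {ar : σ → ℕ} (e : σ) (hE : ar e = 2) (Δ : ℕ) (hΔ : 0 < Δ)
    (p : PLA σ ar) (xs : List ℕ) (hp : IsClosureType e hE Δ p xs) :
    ∃ (ys : List ℕ) (p' : PLA σ ar),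
      (xs ++ ys).Nodup ∧
      IsClosureType e hE Δ p' (xs ++ ys) ∧
      SelfContained e hE Δ p' (xs ++ ys) ∧
      ∀ (A : Type) (_ : Fintype A) (S : Struc σ ar A), ExpandsTreeLe e hE Δ S →
        (∀ β : ℕ → A, (eval S p β = 1 ↔
            ∃! b : Fin ys.length → A, eval S p' (updMany β ys b) = 1)) ∧
        (∀ β : ℕ → A,
          Set.ncard {t : Fin xs.length → A | eval S p (updMany β xs t) = 1} =
          Set.ncard {t : Fin (xs ++ ys).length → A | eval S p' (updMany β (xs ++ ys) t) = 1}) ∧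
        (∀ k : ℕ, k ≤ xs.length → ∀ β : ℕ → A,
          Set.ncard {t : Fin (xs.drop k).length → A | eval S p (updMany β (xs.drop k) t) = 1} =
          Set.ncard {t : Fin ((xs.drop k) ++ ys).length → A |
            eval S p' (updMany β ((xs.drop k) ++ ys) t) = 1}) :=
  statement_7_general e hE Δ p xs hp

end PaperTrees
end
end

section
/- Fix Δ ∈ ℕ⁺ and let τ = {E} ⊆ σ with σ finite relational; all trees considered have height at most Δ. Let p(x̄,ȳ) be a closure type over τ. Then there is a number d ∈ ℕ, depending only on p, such that for every tree T and all ā ∈ T^{|x̄|}, b̄ ∈ T^{|ȳ|} with T ⊨ p(ā,b̄), one has |cl_T(b̄) ∖ cl_T(ā)| = d; that is, the ȳ-rank of p is well defined. -/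
open Classical Filter
noncomputable section

/-!
A realization of `p` extends to a closed tuple `t = āb̄w̄` satisfying the atomic type `φ`.
Because the range of `t` is closed, every ancestor of an element of `t` is again in `t`, so
closures of subtuples of `t` are computed inside `t`, where the tree relation is dictated by
the `E`-literals of `φ`. Hence `|cl(b̄) ∖ cl(ā)|` is the size of a set of positions depending
on `φ` only.
-/

namespace PaperTrees

section ClosureOnClosedTuples

variable {ι A : Type*} {E : A → A → Prop} {R : ι → ι → Prop} {t : ι → A}

lemma transGen_of_transGen_image (hclosed : IsClosedSet E (Set.range t))
    (hR : ∀ i j, E (t i) (t j) ↔ R i j) {i k : ι} (h : Relation.TransGen E (t i) (t k)) :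
    Relation.TransGen R i k := by
  have key : ∀ x y, Relation.TransGen E x y → ∀ k, y = t k → ∀ i, x = t i →
      Relation.TransGen R i k := by
    intro x y h
    induction h using Relation.TransGen.head_induction_on with
    | single hxy =>
      rintro k rfl i rfl
      exact .single ((hR i k).mp hxy)
    | @head x z hxz _ ih =>
      rintro k rfl i rfl
      have hz : z ∈ treeCl E (Set.range t) := Or.inr (Or.inr ⟨t k, ⟨k, rfl⟩, ‹_›⟩)
      rw [hclosed] at hz
      obtain ⟨j, rfl⟩ := hz
      exact .head ((hR i j).mp hxz) (ih k rfl j rfl)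
  exact key _ _ h k rfl i rfl

lemma treeCl_image_eq_image_treeCl (hclosed : IsClosedSet E (Set.range t))
    (hR : ∀ i j, E (t i) (t j) ↔ R i j) (B : Set ι) :
    treeCl E (t '' B) = t '' treeCl R B := by
  have mem_range : ∀ a, a ∈ treeCl E (Set.range t) → a ∈ Set.range t := fun a ha => by
    rwa [hclosed] at ha
  ext a
  constructor
  · rintro (⟨i, hiB, rfl⟩ | hroot | ⟨_, ⟨k, hkB, rfl⟩, hanc⟩)
    · exact ⟨i, Or.inl hiB, rfl⟩
    · obtain ⟨i, rfl⟩ := mem_range a (Or.inr (Or.inl hroot))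
      exact ⟨i, Or.inr (Or.inl fun j hj => hroot (t j) ((hR j i).mpr hj)), rfl⟩
    · obtain ⟨i, rfl⟩ := mem_range a (Or.inr (Or.inr ⟨t k, ⟨k, rfl⟩, hanc⟩))
      exact ⟨i, Or.inr (Or.inr ⟨k, hkB, transGen_of_transGen_image hclosed hR hanc⟩), rfl⟩
  · rintro ⟨i, hi | hroot | ⟨k, hkB, hanc⟩, rfl⟩
    · exact Or.inl ⟨i, hi, rfl⟩
    · refine Or.inr (Or.inl fun x hx => ?_)
      obtain ⟨j, rfl⟩ := mem_range x (Or.inr (Or.inr ⟨t i, ⟨i, rfl⟩, .single hx⟩))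
      exact hroot j ((hR j i).mp hx)
    · exact Or.inr (Or.inr ⟨t k, ⟨k, hkB, rfl⟩,
        Relation.TransGen.lift t (fun u v huv => (hR u v).mpr huv) _ _ hanc⟩)

lemma ncard_treeCl_image_diff (hinj : Function.Injective t)
    (hclosed : IsClosedSet E (Set.range t)) (hR : ∀ i j, E (t i) (t j) ↔ R i j)
    (B C : Set ι) :
    (treeCl E (t '' B) \ treeCl E (t '' C)).ncard = (treeCl R B \ treeCl R C).ncard := by
  rw [treeCl_image_eq_image_treeCl hclosed hR, treeCl_image_eq_image_treeCl hclosed hR,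
    ← Set.image_sdiff hinj, Set.ncard_image_of_injective _ hinj]

end ClosureOnClosedTuples

section AtomicTypes

variable {σ : Type} {ar : σ → ℕ}

def edgeOfAtomic (e : σ) {n : ℕ} (φ : AtomicTypeData σ ar n) (i j : Fin n) : Prop :=
  (⟨e, pairTup e i j⟩ : (R : σ) × (Fin (ar R) → Fin n)) ∈ φ.pos

lemma IsExpansionOf.apply_pairTup_iff {e : σ} {hE : ar e = 2} {A : Type}
    {E0 : A → A → Prop} {S : Struc σ ar A} (hexp : IsExpansionOf e hE E0 S) {n : ℕ}
    (t : Fin n → A) (i j : Fin n) :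
    S e (fun s => t (pairTup e i j s)) = true ↔ E0 (t i) (t j) := by
  simpa [pairTup] using hexp (fun s => t (pairTup e i j s))

lemma edge_iff_edgeOfAtomic {e : σ} {hE : ar e = 2} {Δ n : ℕ} {φ : AtomicTypeData σ ar n}
    (hφ : IsAtomicType e hE Δ φ) {A : Type} {E0 : A → A → Prop} {S : Struc σ ar A}
    (hexp : IsExpansionOf e hE E0 S) {t : Fin n → A} (hsat : satAtomic S φ t) (i j : Fin n) :
    E0 (t i) (t j) ↔ edgeOfAtomic e φ i j := by
  rw [← hexp.apply_pairTup_iff]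
  refine ⟨fun hedge => (hφ.1 i j).resolve_right fun hneg => ?_,
    fun hpos => hsat.1 _ hpos⟩
  simp [hsat.2.1 _ hneg] at hedge

end AtomicTypes

lemma image_eq_image_xtuple {A : Type} (β : ℕ → A) {l vs : List ℕ} (h : vs ⊆ l) :
    β '' {v | v ∈ vs} = xtuple β l '' {j | l.get j ∈ vs} := by
  ext a
  constructor
  · rintro ⟨v, hv, rfl⟩
    obtain ⟨j, hj⟩ := List.mem_iff_get.mp (h hv)
    exact ⟨j, show l.get j ∈ vs from hj ▸ hv, congrArg β hj⟩
  · rintro ⟨j, hj, rfl⟩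
    exact ⟨l.get j, hj, rfl⟩

theorem statement_9_general
    {σ : Type} {ar : σ → ℕ} (e : σ) (hE : ar e = 2) (Δ : ℕ)
    (p : PLA σ ar) (xs ys : List ℕ)
    (hp : IsClosureTypeTau e hE Δ p (xs ++ ys)) :
    ∃ d : ℕ, ∀ (A : Type) (_ : Fintype A) (S : Struc σ ar A) (E0 : A → A → Prop),
      IsTree E0 → HeightLe E0 Δ → IsExpansionOf e hE E0 S →
      ∀ β : ℕ → A, eval S p β = 1 →
        (treeCl E0 (β '' {v | v ∈ ys}) \ treeCl E0 (β '' {v | v ∈ xs})).ncard = d := by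
  obtain ⟨-, -, -, m, φ, ⟨hφ, -, hrealize⟩, -⟩ := hp
  let positionsOf (vs : List ℕ) : Set (Fin ((xs ++ ys).length + m)) :=
    Fin.castAdd m '' {j | (xs ++ ys).get j ∈ vs}
  refine ⟨(treeCl (edgeOfAtomic e φ) (positionsOf ys) \
    treeCl (edgeOfAtomic e φ) (positionsOf xs)).ncard, ?_⟩
  intro A _ S E0 hT hH hexp β hβ
  obtain ⟨w, hsat, hclosed⟩ := ((hrealize A _ S E0 hT hH hexp β).2).mp hβ
  have himage : ∀ vs ⊆ xs ++ ys,
      β '' {v | v ∈ vs} = Fin.append (xtuple β (xs ++ ys)) w '' positionsOf vs := by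
    intro vs hvs
    rw [image_eq_image_xtuple β hvs, Set.image_image]
    simp only [Fin.append_left]
  rw [himage ys (List.subset_append_right _ _), himage xs (List.subset_append_left _ _)]
  exact ncard_treeCl_image_diff hsat.2.2 hclosed (edge_iff_edgeOfAtomic hφ hexp hsat) _ _

/-- Remark 5.18 / Definition 5.19: the ȳ-rank of a closure type `p(x̄,ȳ)` over τ is well
defined: there is `d ∈ ℕ`, depending only on `p`, such that for every tree `T` (of height
at most `Δ`, realized as the `E`-relation of a σ-structure expanding it) and all tuples
`ā, b̄` with `T ⊨ p(ā,b̄)`, one has `|cl_T(b̄) ∖ cl_T(ā)| = d`. -/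
theorem statement_9
    {σ : Type} {ar : σ → ℕ} (e : σ) (hE : ar e = 2) (Δ : ℕ) (hΔ : 0 < Δ)
    (p : PLA σ ar) (xs ys : List ℕ)
    (hp : IsClosureTypeTau e hE Δ p (xs ++ ys)) :
    ∃ d : ℕ, ∀ (A : Type) (_ : Fintype A) (S : Struc σ ar A) (E0 : A → A → Prop),
      IsTree E0 → HeightLe E0 Δ → IsExpansionOf e hE E0 S →
      ∀ β : ℕ → A, eval S p β = 1 →
        (treeCl E0 (β '' {v | v ∈ ys}) \ treeCl E0 (β '' {v | v ∈ xs})).ncard = d :=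
  statement_9_general e hE Δ p xs ys hp

end PaperTrees
end
end
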